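/- arXiv:2406.06945 — 3 statements merged into one kernel-verified Lean document; each statement's English description precedes it below -/
import Mathlib

section
/- Let Y be a real-valued random variable with all absolute moments finite and fix a nonzero real λ. Then κ_{0,λ}(Y)=0, and for every integer n≥1 one has κ_{n,λ}(Y) = Σ_{k=1}^{n} (−1)^{k−1} λ^{k−1} ⟨1⟩_{k,1/λ} {n brace k}_{Y,λ}, where ⟨1⟩_{k,1/λ} = 1·(1+1/λ)·(1+2/λ)⋯(1+(k−1)/λ). -/
open MeasureTheory Finset

noncomputable section

/-- The degenerate falling factorial `(x)_{n,λ} = x(x-λ)⋯(x-(n-1)λ)`. -/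
def dff (lam x : ℝ) (n : ℕ) : ℝ := ∏ i ∈ Finset.range n, (x - i * lam)

/-- The degenerate rising factorial `⟨x⟩_{n,λ} = x(x+λ)⋯(x+(n-1)λ)`. -/
def drf (lam x : ℝ) (n : ℕ) : ℝ := ∏ i ∈ Finset.range n, (x + i * lam)

/-- The ordinary falling factorial `(x)_n = x(x-1)⋯(x-n+1)`. -/
def ffall (x : ℝ) (n : ℕ) : ℝ := ∏ i ∈ Finset.range n, (x - i)

/-- The ordinary rising factorial `⟨x⟩_n = x(x+1)⋯(x+n-1)`. -/
def frise (x : ℝ) (n : ℕ) : ℝ := ∏ i ∈ Finset.range n, (x + i)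

/-- Composition `f ∘ g` of formal power series, valid when `g` has zero constant term. -/
def pscomp (f g : PowerSeries ℝ) : PowerSeries ℝ :=
  PowerSeries.mk fun n =>
    ∑ k ∈ Finset.range (n + 1), PowerSeries.coeff (R := ℝ) k f * PowerSeries.coeff (R := ℝ) n (g ^ k)

/-- The degenerate moment generating series `F_Y = Σ_{n≥0} E[(Y)_{n,λ}] X^n/n!`. -/
def momSeries (lam : ℝ) {Ω : Type*} [MeasurableSpace Ω] (μ : Measure Ω) (Y : Ω → ℝ) :
    PowerSeries ℝ :=
  PowerSeries.mk fun n => (∫ ω, dff lam (Y ω) n ∂μ) / (n.factorial : ℝ)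

/-- Taylor series at `u = 0` of the degenerate logarithm `log_λ(1+u)`:
`Σ_{n≥1} λ^{n-1} (1)_{n,1/λ} u^n/n!`. -/
def degLogSeries (lam : ℝ) : PowerSeries ℝ :=
  PowerSeries.mk fun n => if n = 0 then 0 else lam ^ (n - 1) * dff (1 / lam) 1 n / (n.factorial : ℝ)

/-- `G_Y`, the degenerate cumulant generating series `log_{-λ}(F_Y)`, i.e. the substitution of
`F_Y - 1` into the Taylor series of `log_{-λ}(1+u)`. -/
def cumSeries (lam : ℝ) {Ω : Type*} [MeasurableSpace Ω] (μ : Measure Ω) (Y : Ω → ℝ) :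
    PowerSeries ℝ :=
  pscomp (degLogSeries (-lam)) (momSeries lam μ Y - 1)

/-- The degenerate cumulants `κ_{n,λ}(Y) := n!·(coefficient of X^n in G_Y)`. -/
def degCumulant (lam : ℝ) {Ω : Type*} [MeasurableSpace Ω] (μ : Measure Ω) (Y : Ω → ℝ)
    (n : ℕ) : ℝ :=
  (n.factorial : ℝ) * PowerSeries.coeff (R := ℝ) n (cumSeries lam μ Y)

/-- The probabilistic degenerate Stirling numbers of the second kind
`{n brace k}_{Y,λ} := n!·(coefficient of X^n in (F_Y - 1)^k/k!)`. -/
def braceY (lam : ℝ) {Ω : Type*} [MeasurableSpace Ω] (μ : Measure Ω) (Y : Ω → ℝ)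
    (n k : ℕ) : ℝ :=
  (n.factorial : ℝ) * PowerSeries.coeff (R := ℝ) n ((momSeries lam μ Y - 1) ^ k) / (k.factorial : ℝ)

/-- The probabilistic degenerate Stirling numbers of the first kind, defined by
`(-1)^{n-k} S_{1,λ}^Y(n,k) := n!·(coefficient of X^n in G_Y^k/k!)`. -/
def S1Y (lam : ℝ) {Ω : Type*} [MeasurableSpace Ω] (μ : Measure Ω) (Y : Ω → ℝ)
    (n k : ℕ) : ℝ :=
  (-1 : ℝ) ^ (n - k) * ((n.factorial : ℝ) * PowerSeries.coeff (R := ℝ) n ((cumSeries lam μ Y) ^ k) / (k.factorial : ℝ))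

/-- Taylor series of `log(1+u)`: `Σ_{n≥1} (-1)^{n-1} u^n/n`. -/
def logSeries : PowerSeries ℝ :=
  PowerSeries.mk fun n => if n = 0 then 0 else (-1 : ℝ) ^ (n - 1) / n

/-- `F^x := exp (x · Log F)` for a power series `F` with constant term `1`. -/
def psPow (F : PowerSeries ℝ) (x : ℝ) : PowerSeries ℝ :=
  pscomp (PowerSeries.exp ℝ) (PowerSeries.C (R := ℝ) x * pscomp logSeries (F - 1))

/-- `F ↦ F/X`, i.e. the shift sending `Σ a_{n+1} X^{n+1}` (with `a_0 = 0`) to `Σ a_{n+1} X^n`. -/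
def shiftDown (F : PowerSeries ℝ) : PowerSeries ℝ :=
  PowerSeries.mk fun n => PowerSeries.coeff (R := ℝ) (n + 1) F

/-- The probabilistic degenerate Bernoulli polynomials associated with `Y`:
`Σ_{n≥0} β_{n,λ}^Y(x) X^n/n! = (X/(F_Y-1))·F_Y^x`. -/
def probBernoulli (lam : ℝ) {Ω : Type*} [MeasurableSpace Ω] (μ : Measure Ω) (Y : Ω → ℝ)
    (n : ℕ) (x : ℝ) : ℝ :=
  (n.factorial : ℝ) *
    PowerSeries.coeff (R := ℝ) n ((shiftDown (momSeries lam μ Y - 1))⁻¹ * psPow (momSeries lam μ Y) x)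

/-- The probabilistic degenerate Euler polynomials associated with `Y`:
`Σ_{n≥0} 𝓔_{n,λ}^Y(x) X^n/n! = (2/(F_Y+1))·F_Y^x`. -/
def probEuler (lam : ℝ) {Ω : Type*} [MeasurableSpace Ω] (μ : Measure Ω) (Y : Ω → ℝ)
    (n : ℕ) (x : ℝ) : ℝ :=
  (n.factorial : ℝ) *
    PowerSeries.coeff (R := ℝ) n
      (PowerSeries.C (R := ℝ) 2 * (momSeries lam μ Y + 1)⁻¹ * psPow (momSeries lam μ Y) x)

theorem dff_neg (l x : ℝ) (n : ℕ) : dff (-l) x n = drf l x n := by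
  unfold dff drf
  refine Finset.prod_congr rfl fun i _ => ?_
  ring

theorem coeff_degLogSeries_of_ne_zero (lam : ℝ) {n : ℕ} (hn : n ≠ 0) :
    PowerSeries.coeff n (degLogSeries lam) = lam ^ (n - 1) * dff (1 / lam) 1 n / n.factorial := by
  simp [degLogSeries, hn]

theorem coeff_pscomp_of_coeff_zero_eq_zero {f : PowerSeries ℝ} (hf : PowerSeries.coeff 0 f = 0)
    (g : PowerSeries ℝ) (n : ℕ) :
    PowerSeries.coeff n (pscomp f g) =
      ∑ k ∈ Finset.Icc 1 n, PowerSeries.coeff k f * PowerSeries.coeff n (g ^ k) := by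
  rw [pscomp, PowerSeries.coeff_mk, Finset.range_eq_Ico, Finset.sum_eq_sum_Ico_succ_bot (by omega),
    hf, zero_mul, zero_add]
  rfl

theorem degCumulant_eq_sum (lam : ℝ) {Ω : Type*} [MeasurableSpace Ω] (μ : Measure Ω) (Y : Ω → ℝ)
    (n : ℕ) :
    degCumulant lam μ Y n =
      ∑ k ∈ Finset.Icc 1 n,
        (-1 : ℝ) ^ (k - 1) * lam ^ (k - 1) * drf (1 / lam) 1 k * braceY lam μ Y n k := by
  rw [degCumulant, cumSeries,
    coeff_pscomp_of_coeff_zero_eq_zero (by simp [degLogSeries]), Finset.mul_sum]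
  refine Finset.sum_congr rfl fun k hk => ?_
  have hk0 : k ≠ 0 := by
    rw [Finset.mem_Icc] at hk
    omega
  rw [coeff_degLogSeries_of_ne_zero _ hk0, one_div_neg_eq_neg_one_div, dff_neg, braceY, neg_pow]
  field_simp

theorem kappa_zero_and_kappa_eq_sum_braceY_general {Ω : Type*} [MeasurableSpace Ω] (μ : MeasureTheory.Measure Ω)
    (Y : Ω → ℝ) (lam : ℝ) :
    degCumulant lam μ Y 0 = 0 ∧
      ∀ n : ℕ, 1 ≤ n →
        degCumulant lam μ Y n =
          ∑ k ∈ Finset.Icc 1 n,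
            (-1 : ℝ) ^ (k - 1) * lam ^ (k - 1) * drf (1 / lam) 1 k * braceY lam μ Y n k :=
  ⟨by simpa using degCumulant_eq_sum lam μ Y 0, fun n _ => degCumulant_eq_sum lam μ Y n⟩

theorem kappa_zero_and_kappa_eq_sum_braceY {Ω : Type*} [MeasurableSpace Ω] (μ : MeasureTheory.Measure Ω)
    [MeasureTheory.IsProbabilityMeasure μ] (Y : Ω → ℝ) (hY : Measurable Y)
    (hmom : ∀ n : ℕ, MeasureTheory.Integrable (fun ω => |Y ω| ^ n) μ)
    (lam : ℝ) (hlam : lam ≠ 0) :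
    degCumulant lam μ Y 0 = 0 ∧
      ∀ n : ℕ, 1 ≤ n →
        degCumulant lam μ Y n =
          ∑ k ∈ Finset.Icc 1 n,
            (-1 : ℝ) ^ (k - 1) * lam ^ (k - 1) * drf (1 / lam) 1 k * braceY lam μ Y n k :=
  kappa_zero_and_kappa_eq_sum_braceY_general μ Y lam

end
end

section
/- Let Y be a real-valued random variable with all absolute moments finite and fix a nonzero real λ. Then for every real number x and every integer n≥0, n!·(coefficient of X^n in F_Y^x) = Σ_{k=0}^{n} {n brace k}_{Y,λ} (x)_k = Σ_{k=0}^{n} (−1)^{n−k} ⟨x⟩_{k,λ} S_{1,λ}^Y(n,k), where (x)_k = x(x−1)⋯(x−k+1) is the ordinary falling factorial. -/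
open MeasureTheory Finset

noncomputable section

namespace PSAux

open PowerSeries

lemma coeff_derivativeFun' (f : PowerSeries ℝ) (n : ℕ) :
    PowerSeries.coeff (R := ℝ) n (PowerSeries.derivativeFun f) =
      PowerSeries.coeff (R := ℝ) (n + 1) f * (n + 1) :=
  PowerSeries.coeff_derivative f n

lemma derivativeFun_C' (r : ℝ) :
    PowerSeries.derivativeFun (PowerSeries.C (R := ℝ) r) = 0 :=
  PowerSeries.derivative_C

lemma coeff_pscomp (f g : PowerSeries ℝ) (n : ℕ) :
    PowerSeries.coeff (R := ℝ) n (pscomp f g) =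
      ∑ k ∈ Finset.range (n + 1), PowerSeries.coeff (R := ℝ) k f * PowerSeries.coeff (R := ℝ) n (g ^ k) := by
  simp [pscomp]

lemma coeff_pow_eq_zero {g : PowerSeries ℝ} (hg : PowerSeries.constantCoeff (R := ℝ) g = 0)
    {k n : ℕ} (h : n < k) : PowerSeries.coeff (R := ℝ) n (g ^ k) = 0 := by
  have hdvd : (PowerSeries.X : PowerSeries ℝ) ^ k ∣ g ^ k :=
    pow_dvd_pow_of_dvd (PowerSeries.X_dvd_iff.mpr hg) k
  exact (PowerSeries.X_pow_dvd_iff.mp hdvd) n h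

lemma coeff_pscomp_ext {g : PowerSeries ℝ} (hg : PowerSeries.constantCoeff (R := ℝ) g = 0)
    (f : PowerSeries ℝ) {n N : ℕ} (hn : n ≤ N) :
    PowerSeries.coeff (R := ℝ) n (pscomp f g) =
      ∑ k ∈ Finset.range (N + 1), PowerSeries.coeff (R := ℝ) k f * PowerSeries.coeff (R := ℝ) n (g ^ k) := by
  rw [coeff_pscomp]
  refine Finset.sum_subset (Finset.range_subset_range.mpr (by omega)) ?_
  intro k hk hk'
  have : n < k := by simp only [Finset.mem_range] at hk hk'; omega
  rw [coeff_pow_eq_zero hg this, mul_zero]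

lemma coeff_pscomp_congr {f₁ f₂ g : PowerSeries ℝ} {n : ℕ}
    (h : ∀ k ≤ n, PowerSeries.coeff (R := ℝ) k f₁ = PowerSeries.coeff (R := ℝ) k f₂) :
    PowerSeries.coeff (R := ℝ) n (pscomp f₁ g) = PowerSeries.coeff (R := ℝ) n (pscomp f₂ g) := by
  rw [coeff_pscomp, coeff_pscomp]
  refine Finset.sum_congr rfl fun k hk => ?_
  rw [h k (by simpa [Nat.lt_succ_iff] using hk)]

lemma pscomp_coe {g : PowerSeries ℝ} (hg : PowerSeries.constantCoeff (R := ℝ) g = 0)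
    (p : Polynomial ℝ) : pscomp (p : PowerSeries ℝ) g = Polynomial.aeval g p := by
  ext n
  set N := max n p.natDegree with hN
  rw [coeff_pscomp_ext hg _ (le_max_left n p.natDegree),
    Polynomial.aeval_eq_sum_range' (n := N + 1) (by omega) g, map_sum]
  refine Finset.sum_congr rfl fun k _ => ?_
  rw [Polynomial.coeff_coe, _root_.map_smul, smul_eq_mul]


lemma coeff_pscomp_trunc {f g : PowerSeries ℝ} {n m : ℕ} (h : m ≤ n) :
    PowerSeries.coeff (R := ℝ) m (pscomp ((PowerSeries.trunc (n+1) f : Polynomial ℝ) : PowerSeries ℝ) g) =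
      PowerSeries.coeff (R := ℝ) m (pscomp f g) := by
  refine coeff_pscomp_congr fun k hk => ?_
  rw [Polynomial.coeff_coe, PowerSeries.coeff_trunc, if_pos (by omega)]

lemma pscomp_mul {g : PowerSeries ℝ} (hg : PowerSeries.constantCoeff (R := ℝ) g = 0)
    (f₁ f₂ : PowerSeries ℝ) :
    pscomp (f₁ * f₂) g = pscomp f₁ g * pscomp f₂ g := by
  ext n
  set t₁ := PowerSeries.trunc (n+1) f₁
  set t₂ := PowerSeries.trunc (n+1) f₂
  have h1 : PowerSeries.coeff (R := ℝ) n (pscomp (f₁ * f₂) g) =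
      PowerSeries.coeff (R := ℝ) n (pscomp ((t₁ * t₂ : Polynomial ℝ) : PowerSeries ℝ) g) := by
    refine (coeff_pscomp_congr fun k hk => ?_).symm
    rw [Polynomial.coeff_coe, Polynomial.coeff_mul, PowerSeries.coeff_mul]
    refine Finset.sum_congr rfl fun p hp => ?_
    have hp' := Finset.HasAntidiagonal.mem_antidiagonal.mp hp
    rw [PowerSeries.coeff_trunc, PowerSeries.coeff_trunc, if_pos (by omega), if_pos (by omega)]
  rw [h1, pscomp_coe hg, map_mul, ← pscomp_coe hg t₁, ← pscomp_coe hg t₂,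
    PowerSeries.coeff_mul, PowerSeries.coeff_mul]
  refine Finset.sum_congr rfl fun p hp => ?_
  have hp' := Finset.HasAntidiagonal.mem_antidiagonal.mp hp
  rw [coeff_pscomp_trunc (by omega), coeff_pscomp_trunc (by omega)]

lemma pscomp_C (g : PowerSeries ℝ) (c : ℝ) : pscomp (PowerSeries.C (R := ℝ) c) g = PowerSeries.C (R := ℝ) c := by
  ext n
  rw [coeff_pscomp]
  rcases Nat.eq_zero_or_pos n with rfl | hn
  · simp [PowerSeries.coeff_C]
  · rw [Finset.sum_eq_single 0]
    · simp [PowerSeries.coeff_C, Nat.pos_iff_ne_zero.mp hn]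
    · intro k _ hk; simp [PowerSeries.coeff_C, hk]
    · simp
  
lemma pscomp_one (g : PowerSeries ℝ) : pscomp 1 g = 1 := by
  have := pscomp_C g 1; simpa using this

lemma pscomp_X {g : PowerSeries ℝ} (hg : PowerSeries.constantCoeff (R := ℝ) g = 0) :
    pscomp PowerSeries.X g = g := by
  ext n
  rw [coeff_pscomp, Finset.sum_eq_single 1]
  · simp
  · intro k _ hk; simp [PowerSeries.coeff_X, hk]
  · intro h
    have hn : n = 0 := by simpa using h
    subst hn
    simpa using hg

lemma pscomp_add (f₁ f₂ g : PowerSeries ℝ) :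
    pscomp (f₁ + f₂) g = pscomp f₁ g + pscomp f₂ g := by
  ext n
  simp [coeff_pscomp, add_mul, Finset.sum_add_distrib]

lemma pscomp_pow {g : PowerSeries ℝ} (hg : PowerSeries.constantCoeff (R := ℝ) g = 0)
    (f : PowerSeries ℝ) (m : ℕ) : pscomp (f ^ m) g = (pscomp f g) ^ m := by
  induction m with
  | zero => simpa using pscomp_one g
  | succ m ih => rw [pow_succ, pscomp_mul hg, ih, pow_succ]

lemma pscomp_C_mul {g : PowerSeries ℝ} (hg : PowerSeries.constantCoeff (R := ℝ) g = 0)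
    (c : ℝ) (f : PowerSeries ℝ) :
    pscomp (PowerSeries.C (R := ℝ) c * f) g = PowerSeries.C (R := ℝ) c * pscomp f g := by
  rw [pscomp_mul hg, pscomp_C]

lemma constantCoeff_pscomp (f g : PowerSeries ℝ) :
    PowerSeries.constantCoeff (R := ℝ) (pscomp f g) = PowerSeries.constantCoeff (R := ℝ) f := by
  have := coeff_pscomp f g 0
  simp only [PowerSeries.coeff_zero_eq_constantCoeff] at this
  simpa using this

lemma pscomp_assoc {g h : PowerSeries ℝ} (hg : PowerSeries.constantCoeff (R := ℝ) g = 0)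
    (hh : PowerSeries.constantCoeff (R := ℝ) h = 0) (f : PowerSeries ℝ) :
    pscomp f (pscomp h g) = pscomp (pscomp f h) g := by
  ext n
  rw [coeff_pscomp, coeff_pscomp]
  have key : ∀ k, PowerSeries.coeff (R := ℝ) n ((pscomp h g) ^ k) =
      ∑ j ∈ Finset.range (n+1), PowerSeries.coeff (R := ℝ) j (h ^ k) * PowerSeries.coeff (R := ℝ) n (g ^ j) := by
    intro k
    rw [← pscomp_pow hg, coeff_pscomp]
  calc ∑ k ∈ Finset.range (n+1), PowerSeries.coeff (R := ℝ) k f * PowerSeries.coeff (R := ℝ) n ((pscomp h g) ^ k)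
      = ∑ k ∈ Finset.range (n+1), ∑ j ∈ Finset.range (n+1),
          PowerSeries.coeff (R := ℝ) k f * (PowerSeries.coeff (R := ℝ) j (h ^ k) * PowerSeries.coeff (R := ℝ) n (g ^ j)) := by
        refine Finset.sum_congr rfl fun k _ => ?_
        rw [key k, Finset.mul_sum]
    _ = ∑ j ∈ Finset.range (n+1), (∑ k ∈ Finset.range (n+1),
          PowerSeries.coeff (R := ℝ) k f * PowerSeries.coeff (R := ℝ) j (h ^ k)) * PowerSeries.coeff (R := ℝ) n (g ^ j) := by
        rw [Finset.sum_comm]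
        refine Finset.sum_congr rfl fun j _ => ?_
        rw [Finset.sum_mul]
        refine Finset.sum_congr rfl fun k _ => (mul_assoc _ _ _).symm
    _ = ∑ j ∈ Finset.range (n+1),
          PowerSeries.coeff (R := ℝ) j (pscomp f h) * PowerSeries.coeff (R := ℝ) n (g ^ j) := by
        refine Finset.sum_congr rfl fun j hj => ?_
        congr 1
        rw [coeff_pscomp_ext hh f (by simpa [Nat.lt_succ_iff] using hj)]


/-- `Σ a^k X^k / k!`. -/
def expA (a : ℝ) : PowerSeries ℝ := PowerSeries.mk fun k => a ^ k / k.factorial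

/-- The binomial series `Σ (y)_k X^k / k!`, i.e. `(1+X)^y`. -/
def Bser (y : ℝ) : PowerSeries ℝ := PowerSeries.mk fun k => ffall y k / k.factorial

/-- The degenerate exponential-type series `Σ ⟨x⟩_{k,λ} X^k / k!`. -/
def Eser (lam x : ℝ) : PowerSeries ℝ := PowerSeries.mk fun k => drf lam x k / k.factorial

lemma factorial_inv_mul (n k : ℕ) (hk : k ≤ n) :
    (1:ℝ) / (k.factorial * (n-k).factorial) = (n.choose k : ℝ) / n.factorial := by
  have h := Nat.choose_mul_factorial_mul_factorial hk
  have h' : ((n.choose k : ℝ) * k.factorial * (n-k).factorial) = n.factorial := by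
    exact_mod_cast congrArg Nat.cast h
  have h1 : (k.factorial : ℝ) ≠ 0 := Nat.cast_ne_zero.mpr k.factorial_ne_zero
  have h2 : ((n-k).factorial : ℝ) ≠ 0 := Nat.cast_ne_zero.mpr (n-k).factorial_ne_zero
  have h3 : (n.factorial : ℝ) ≠ 0 := Nat.cast_ne_zero.mpr n.factorial_ne_zero
  field_simp
  linarith [h']

lemma expA_mul (a b : ℝ) : expA a * expA b = expA (a + b) := by
  ext n
  rw [PowerSeries.coeff_mul, Finset.Nat.sum_antidiagonal_eq_sum_range_succ_mk]
  simp only [expA, PowerSeries.coeff_mk]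
  rw [add_pow]
  rw [Finset.sum_div]
  refine Finset.sum_congr rfl fun k hk => ?_
  have hk' : k ≤ n := by simpa [Nat.lt_succ_iff] using hk
  have := factorial_inv_mul n k hk'
  have key : a ^ k / (k.factorial:ℝ) * (b ^ (n - k) / ((n-k).factorial:ℝ)) =
      a ^ k * b ^ (n-k) * ((1:ℝ)/((k.factorial:ℝ) * ((n-k).factorial:ℝ))) := by ring
  rw [key, this]; ring

lemma expA_zero : expA 0 = 1 := by
  ext n
  simp only [expA, PowerSeries.coeff_mk]
  cases n with
  | zero => simp
  | succ m => simp [PowerSeries.coeff_one]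

lemma expA_nat_pow (m : ℕ) : expA (m : ℝ) = (expA 1) ^ m := by
  induction m with
  | zero => simpa using expA_zero
  | succ m ih => rw [pow_succ, ← ih, expA_mul]; norm_num

lemma exp_eq_expA_one : PowerSeries.exp ℝ = expA 1 := by
  ext n
  rw [PowerSeries.coeff_exp]
  simp [expA, one_div]

lemma constantCoeff_logSeries : PowerSeries.constantCoeff (R := ℝ) logSeries = 0 := by
  simp [logSeries, ← PowerSeries.coeff_zero_eq_constantCoeff]

open PowerSeries in
lemma derivativeFun_pow (g : PowerSeries ℝ) (n : ℕ) :
    derivativeFun (g ^ (n+1)) = PowerSeries.C (R := ℝ) (n+1) * g ^ n * derivativeFun g := by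
  induction n with
  | zero => simp [pow_one]
  | succ n ih =>
    rw [pow_succ _ (n+1), derivativeFun_mul, ih]
    push_cast
    rw [smul_eq_mul, smul_eq_mul]
    ring_nf
    simp only [map_add, map_one, map_ofNat]
    ring

open PowerSeries in
lemma derivativeFun_aeval (g : PowerSeries ℝ) (p : Polynomial ℝ) :
    derivativeFun (Polynomial.aeval g p : PowerSeries ℝ) =
      (Polynomial.aeval g (Polynomial.derivative p)) * derivativeFun g := by
  induction p using Polynomial.induction_on' with
  | add p q hp hq =>
    rw [map_add, derivativeFun_add, hp, hq, map_add, map_add, add_mul]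
  | monomial k a =>
    rw [Polynomial.aeval_monomial, Polynomial.derivative_monomial, Polynomial.aeval_monomial]
    have halg : (algebraMap ℝ (PowerSeries ℝ)) a = PowerSeries.C (R := ℝ) a := rfl
    have halg2 : (algebraMap ℝ (PowerSeries ℝ)) (a * k) = PowerSeries.C (R := ℝ) (a * k) := rfl
    cases k with
    | zero =>
      simp [halg, derivativeFun_mul, derivativeFun_C', derivativeFun_one]
    | succ k =>
      rw [halg, halg2, derivativeFun_mul, derivativeFun_C', derivativeFun_pow]
      simp only [smul_eq_mul, mul_zero, add_zero, Nat.add_sub_cancel]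
      push_cast
      rw [map_mul, map_add, map_one]
      ring

open PowerSeries in
lemma derivativeFun_pscomp {g : PowerSeries ℝ} (hg : PowerSeries.constantCoeff (R := ℝ) g = 0)
    (f : PowerSeries ℝ) :
    derivativeFun (pscomp f g) = pscomp (derivativeFun f) g * derivativeFun g := by
  ext n
  set p := PowerSeries.trunc (n+2) f with hp
  have h1 : PowerSeries.coeff (R := ℝ) n (derivativeFun (pscomp f g)) =
      PowerSeries.coeff (R := ℝ) n (derivativeFun (pscomp ((p : Polynomial ℝ) : PowerSeries ℝ) g)) := by
    rw [coeff_derivativeFun', coeff_derivativeFun']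
    congr 1
    refine (coeff_pscomp_congr fun k hk => ?_).symm
    rw [Polynomial.coeff_coe, PowerSeries.coeff_trunc, if_pos (by omega)]
  rw [h1, pscomp_coe hg, derivativeFun_aeval, ← pscomp_coe hg, PowerSeries.coeff_mul,
    PowerSeries.coeff_mul]
  refine Finset.sum_congr rfl fun q hq => ?_
  have hq' := Finset.HasAntidiagonal.mem_antidiagonal.mp hq
  congr 1
  refine coeff_pscomp_congr fun k hk => ?_
  rw [Polynomial.coeff_coe, Polynomial.coeff_derivative, PowerSeries.coeff_trunc,
    if_pos (by omega), coeff_derivativeFun']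


open PowerSeries in
lemma derivativeFun_expA_one : derivativeFun (expA 1) = expA 1 := by
  ext n
  rw [coeff_derivativeFun']
  simp only [expA, PowerSeries.coeff_mk, one_pow]
  rw [Nat.factorial_succ]
  have h1 : ((n+1 : ℕ) : ℝ) ≠ 0 := by positivity
  have h2 : (n.factorial : ℝ) ≠ 0 := Nat.cast_ne_zero.mpr n.factorial_ne_zero
  field_simp
  push_cast; ring

open PowerSeries in
lemma derivativeFun_logSeries : derivativeFun logSeries = PowerSeries.mk fun n => (-1:ℝ)^n := by
  ext n
  rw [coeff_derivativeFun']
  simp only [logSeries, PowerSeries.coeff_mk, Nat.succ_ne_zero, if_false, Nat.add_sub_cancel]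
  have h1 : ((n+1 : ℕ) : ℝ) ≠ 0 := by positivity
  field_simp
  push_cast; ring

open PowerSeries in
lemma one_add_X_mul_derivativeFun_logSeries :
    (1 + PowerSeries.X) * derivativeFun logSeries = 1 := by
  rw [derivativeFun_logSeries]
  ext n
  rw [add_mul, one_mul, map_add]
  cases n with
  | zero => simp
  | succ m =>
    rw [PowerSeries.coeff_succ_X_mul]
    simp [pow_succ, PowerSeries.coeff_one]

open PowerSeries in
lemma eq_one_add_X_of_ode (F : PowerSeries ℝ)
    (hode : (1 + PowerSeries.X) * derivativeFun F = F)
    (h0 : PowerSeries.constantCoeff (R := ℝ) F = 1) : F = 1 + PowerSeries.X := by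
  have hcoeff : ∀ n : ℕ, PowerSeries.coeff (R := ℝ) n F =
      PowerSeries.coeff (R := ℝ) (n+1) F * (n+1) + PowerSeries.coeff (R := ℝ) n (PowerSeries.X * derivativeFun F) := by
    intro n
    conv_lhs => rw [← hode]
    rw [add_mul, one_mul, map_add, coeff_derivativeFun']
  have h1 : PowerSeries.coeff (R := ℝ) 1 F = 1 := by
    have := hcoeff 0
    rw [PowerSeries.coeff_zero_X_mul] at this
    simp only [PowerSeries.coeff_zero_eq_constantCoeff, h0] at this
    push_cast at this
    linarith
  have hrec : ∀ n : ℕ, PowerSeries.coeff (R := ℝ) (n+2) F * (n+2) =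
      - (n+1) * PowerSeries.coeff (R := ℝ) (n+1) F + PowerSeries.coeff (R := ℝ) (n+1) F := by
    intro n
    have := hcoeff (n+1)
    rw [PowerSeries.coeff_succ_X_mul, coeff_derivativeFun'] at this
    push_cast at this ⊢
    linarith
  have hzero : ∀ m : ℕ, PowerSeries.coeff (R := ℝ) (m+2) F = 0 := by
    intro m
    induction m with
    | zero =>
      have := hrec 0
      norm_num at this
      exact this
    | succ m ih =>
      have h := hrec (m+1)
      rw [ih] at h
      have key : PowerSeries.coeff (R := ℝ) (m+1+2) F * ((m:ℝ)+3) = 0 := by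
        push_cast at h ⊢; linarith
      exact (mul_eq_zero.mp key).resolve_right (by positivity)
  ext n
  match n with
  | 0 => simp [PowerSeries.coeff_zero_eq_constantCoeff, h0, PowerSeries.coeff_one]
  | 1 => simp [h1, PowerSeries.coeff_one, PowerSeries.coeff_X]
  | (m+2) =>
    rw [hzero m, map_add]
    simp [PowerSeries.coeff_one, PowerSeries.coeff_X]

open PowerSeries in
lemma exp_comp_log : pscomp (expA 1) logSeries = 1 + PowerSeries.X := by
  refine eq_one_add_X_of_ode _ ?_ ?_
  · rw [derivativeFun_pscomp constantCoeff_logSeries, derivativeFun_expA_one]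
    calc (1 + PowerSeries.X) * (pscomp (expA 1) logSeries * derivativeFun logSeries)
        = pscomp (expA 1) logSeries * ((1 + PowerSeries.X) * derivativeFun logSeries) := by ring
      _ = pscomp (expA 1) logSeries := by rw [one_add_X_mul_derivativeFun_logSeries, mul_one]
  · rw [constantCoeff_pscomp]
    simp [expA, ← PowerSeries.coeff_zero_eq_constantCoeff]


lemma ffall_succ (x : ℝ) (n : ℕ) : ffall x (n+1) = ffall x n * (x - n) := by
  rw [ffall, Finset.prod_range_succ, ffall]

lemma ffall_add_one (x : ℝ) (n : ℕ) : ffall (x+1) (n+1) = (x+1) * ffall x n := by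
  have h : ∀ i : ℕ, (x + 1 - ((i+1 : ℕ):ℝ)) = x - i := by intro i; push_cast; ring
  simp only [ffall, Finset.prod_range_succ', h]
  push_cast
  ring

lemma Bser_succ (x : ℝ) : Bser (x+1) = Bser x + PowerSeries.X * Bser x := by
  ext n
  rw [map_add]
  cases n with
  | zero => simp [Bser, ffall]
  | succ m =>
    rw [PowerSeries.coeff_succ_X_mul]
    simp only [Bser, PowerSeries.coeff_mk]
    rw [ffall_add_one, ffall_succ, Nat.factorial_succ]
    have h1 : ((m+1 : ℕ) : ℝ) ≠ 0 := by positivity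
    have h2 : (m.factorial : ℝ) ≠ 0 := Nat.cast_ne_zero.mpr m.factorial_ne_zero
    push_cast
    field_simp
    ring

lemma Bser_zero : Bser 0 = 1 := by
  ext n
  cases n with
  | zero => simp [Bser, ffall]
  | succ m =>
    simp only [Bser, PowerSeries.coeff_mk, PowerSeries.coeff_one, Nat.succ_ne_zero, if_false]
    rw [ffall, Finset.prod_eq_zero (Finset.mem_range.mpr (Nat.succ_pos m)) (by norm_num)]
    simp

lemma Bser_nat (m : ℕ) : Bser (m : ℝ) = (1 + PowerSeries.X) ^ m := by
  induction m with
  | zero => simpa using Bser_zero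
  | succ m ih =>
    push_cast
    rw [Bser_succ, ih, pow_succ]
    ring

lemma starA (x : ℝ) : pscomp (expA x) logSeries = Bser x := by
  ext n
  set p1 : Polynomial ℝ := ∑ k ∈ Finset.range (n+1),
    Polynomial.C (PowerSeries.coeff (R := ℝ) n (logSeries ^ k) / k.factorial) * Polynomial.X ^ k with hp1
  set p2 : Polynomial ℝ := Polynomial.C ((n.factorial : ℝ)⁻¹) *
    ∏ i ∈ Finset.range n, (Polynomial.X - Polynomial.C (i:ℝ)) with hp2
  have he1 : ∀ y : ℝ, Polynomial.eval y p1 = PowerSeries.coeff (R := ℝ) n (pscomp (expA y) logSeries) := by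
    intro y
    rw [coeff_pscomp, hp1, Polynomial.eval_finset_sum]
    refine Finset.sum_congr rfl fun k _ => ?_
    simp only [Polynomial.eval_mul, Polynomial.eval_C, Polynomial.eval_pow, Polynomial.eval_X,
      expA, PowerSeries.coeff_mk]
    ring
  have he2 : ∀ y : ℝ, Polynomial.eval y p2 = PowerSeries.coeff (R := ℝ) n (Bser y) := by
    intro y
    simp only [hp2, Bser, PowerSeries.coeff_mk, Polynomial.eval_mul, Polynomial.eval_C,
      Polynomial.eval_prod, Polynomial.eval_sub, Polynomial.eval_X, ffall]
    rw [div_eq_inv_mul]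
  have hnat : ∀ m : ℕ, Polynomial.eval (m:ℝ) p1 = Polynomial.eval (m:ℝ) p2 := by
    intro m
    rw [he1, he2, expA_nat_pow, pscomp_pow constantCoeff_logSeries, exp_comp_log, ← Bser_nat]
  have hsub : Set.range (fun m : ℕ => (m:ℝ)) ⊆
      {y : ℝ | Polynomial.eval y p1 = Polynomial.eval y p2} := by
    rintro y ⟨m, rfl⟩
    exact hnat m
  have hinf : Set.Infinite {y : ℝ | Polynomial.eval y p1 = Polynomial.eval y p2} :=
    Set.Infinite.mono hsub (Set.infinite_range_of_injective Nat.cast_injective)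
  have hpq := Polynomial.eq_of_infinite_eval_eq p1 p2 hinf
  calc PowerSeries.coeff (R := ℝ) n (pscomp (expA x) logSeries) = Polynomial.eval x p1 := (he1 x).symm
    _ = Polynomial.eval x p2 := by rw [hpq]
    _ = PowerSeries.coeff (R := ℝ) n (Bser x) := he2 x

lemma Bser_add (a b : ℝ) : Bser a * Bser b = Bser (a+b) := by
  rw [← starA, ← starA, ← starA, ← pscomp_mul constantCoeff_logSeries, expA_mul]

lemma Bser_pow (y : ℝ) (m : ℕ) : (Bser y) ^ m = Bser (m * y) := by
  induction m with
  | zero => rw [pow_zero, Nat.cast_zero, zero_mul, Bser_zero]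
  | succ m ih =>
    rw [pow_succ, ih, Bser_add]
    have h : (m:ℝ) * y + y = ((m:ℕ)+1 : ℝ) * y := by ring
    rw [h]
    norm_num



lemma constantCoeff_degLog (lam : ℝ) : PowerSeries.constantCoeff (R := ℝ) (degLogSeries lam) = 0 := by
  simp [degLogSeries, ← PowerSeries.coeff_zero_eq_constantCoeff]

lemma degLog_eq {lam : ℝ} (hlam : lam ≠ 0) :
    degLogSeries (-lam) = PowerSeries.C (R := ℝ) (-1/lam) * (Bser (-lam) - 1) := by
  ext n
  rw [PowerSeries.coeff_C_mul, map_sub]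
  cases n with
  | zero =>
    simp [degLogSeries, Bser, ffall, ← PowerSeries.coeff_zero_eq_constantCoeff]
  | succ m =>
    simp only [degLogSeries, Bser, PowerSeries.coeff_mk, Nat.succ_ne_zero, if_false,
      Nat.add_sub_cancel, PowerSeries.coeff_one]
    have key : ffall (-lam) (m+1) = (-lam)^(m+1) * dff (1/(-lam)) 1 (m+1) := by
      rw [ffall, dff, ← Finset.card_range (m+1), ← Finset.prod_const, Finset.card_range,
        ← Finset.prod_mul_distrib]
      refine Finset.prod_congr rfl fun i _ => ?_
      rw [mul_sub, mul_one, mul_left_comm, mul_one_div_cancel (neg_ne_zero.mpr hlam), mul_one]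
    rw [key]
    have h2 : ((m+1).factorial : ℝ) ≠ 0 := Nat.cast_ne_zero.mpr (m+1).factorial_ne_zero
    field_simp
    ring

lemma Eser_neg_nat_mul (lam : ℝ) (m : ℕ) :
    Eser lam (-(m:ℝ)*lam) = PowerSeries.rescale (-lam) (Bser (m:ℝ)) := by
  ext k
  rw [PowerSeries.coeff_rescale]
  simp only [Eser, Bser, PowerSeries.coeff_mk]
  rw [drf, ffall, mul_div_assoc']
  congr 1
  rw [← Finset.card_range k, ← Finset.prod_const, Finset.card_range, ← Finset.prod_mul_distrib]
  refine Finset.prod_congr rfl fun i _ => ?_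
  ring

lemma one_add_C_mul_degLog {lam : ℝ} (hlam : lam ≠ 0) :
    1 + PowerSeries.C (R := ℝ) (-lam) * degLogSeries (-lam) = Bser (-lam) := by
  rw [degLog_eq hlam, ← mul_assoc, ← map_mul]
  have h : (-lam) * (-1/lam) = 1 := by field_simp
  rw [h, map_one, one_mul]
  ring

lemma starB {lam : ℝ} (hlam : lam ≠ 0) (x : ℝ) :
    pscomp (Eser lam x) (degLogSeries (-lam)) = Bser x := by
  have hdl0 : PowerSeries.constantCoeff (R := ℝ) (degLogSeries (-lam)) = 0 := constantCoeff_degLog _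
  ext n
  set p1 : Polynomial ℝ := ∑ k ∈ Finset.range (n+1),
    Polynomial.C (PowerSeries.coeff (R := ℝ) n ((degLogSeries (-lam)) ^ k) / k.factorial) *
      ∏ i ∈ Finset.range k, (Polynomial.X + Polynomial.C ((i:ℝ) * lam)) with hp1
  set p2 : Polynomial ℝ := Polynomial.C ((n.factorial : ℝ)⁻¹) *
    ∏ i ∈ Finset.range n, (Polynomial.X - Polynomial.C (i:ℝ)) with hp2
  have he1 : ∀ y : ℝ, Polynomial.eval y p1 =
      PowerSeries.coeff (R := ℝ) n (pscomp (Eser lam y) (degLogSeries (-lam))) := by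
    intro y
    rw [coeff_pscomp, hp1, Polynomial.eval_finset_sum]
    refine Finset.sum_congr rfl fun k _ => ?_
    simp only [Polynomial.eval_mul, Polynomial.eval_C, Polynomial.eval_prod, Polynomial.eval_add,
      Polynomial.eval_X, Eser, PowerSeries.coeff_mk, drf]
    ring
  have he2 : ∀ y : ℝ, Polynomial.eval y p2 = PowerSeries.coeff (R := ℝ) n (Bser y) := by
    intro y
    simp only [hp2, Bser, PowerSeries.coeff_mk, Polynomial.eval_mul, Polynomial.eval_C,
      Polynomial.eval_prod, Polynomial.eval_sub, Polynomial.eval_X, ffall]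
    rw [div_eq_inv_mul]
  have hnat : ∀ m : ℕ, Polynomial.eval (-(m:ℝ)*lam) p1 = Polynomial.eval (-(m:ℝ)*lam) p2 := by
    intro m
    rw [he1, he2, Eser_neg_nat_mul, Bser_nat, map_pow, map_add, map_one, PowerSeries.rescale_X,
      pscomp_pow hdl0, pscomp_add, pscomp_one, pscomp_C_mul hdl0, pscomp_X hdl0,
      one_add_C_mul_degLog hlam, Bser_pow]
    have h : (m:ℝ) * -lam = -(m:ℝ)*lam := by ring
    rw [h]
  have hsub : Set.range (fun m : ℕ => -(m:ℝ)*lam) ⊆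
      {y : ℝ | Polynomial.eval y p1 = Polynomial.eval y p2} := by
    rintro y ⟨m, rfl⟩
    exact hnat m
  have hinj : Function.Injective (fun m : ℕ => -(m:ℝ)*lam) := by
    intro a b hab
    simp only [neg_mul, neg_inj] at hab
    exact Nat.cast_injective (mul_right_cancel₀ hlam hab)
  have hinf : Set.Infinite {y : ℝ | Polynomial.eval y p1 = Polynomial.eval y p2} :=
    Set.Infinite.mono hsub (Set.infinite_range_of_injective hinj)
  have hpq := Polynomial.eq_of_infinite_eval_eq p1 p2 hinf
  calc PowerSeries.coeff (R := ℝ) n (pscomp (Eser lam x) (degLogSeries (-lam)))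
      = Polynomial.eval x p1 := (he1 x).symm
    _ = Polynomial.eval x p2 := by rw [hpq]
    _ = PowerSeries.coeff (R := ℝ) n (Bser x) := he2 x


open PowerSeries in
lemma pscomp_exp_C_mul (x : ℝ) (L : PowerSeries ℝ) :
    pscomp (PowerSeries.exp ℝ) (PowerSeries.C (R := ℝ) x * L) = pscomp (expA x) L := by
  ext n
  rw [coeff_pscomp, coeff_pscomp]
  refine Finset.sum_congr rfl fun k _ => ?_
  rw [mul_pow, ← map_pow, PowerSeries.coeff_C_mul, PowerSeries.coeff_exp]
  simp only [expA, PowerSeries.coeff_mk]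
  have h : (algebraMap ℚ ℝ) (1/(k.factorial:ℚ)) = 1/(k.factorial:ℝ) := by
    simp [eq_ratCast]
  rw [h]
  ring

lemma constantCoeff_momSeries_sub_one {Ω : Type*} [MeasurableSpace Ω] (μ : Measure Ω)
    [IsProbabilityMeasure μ] (Y : Ω → ℝ) (lam : ℝ) :
    PowerSeries.constantCoeff (R := ℝ) (momSeries lam μ Y - 1) = 0 := by
  rw [map_sub, map_one, ← PowerSeries.coeff_zero_eq_constantCoeff]
  simp only [momSeries, PowerSeries.coeff_mk, Nat.factorial_zero, Nat.cast_one, div_one]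
  have h : ∀ ω : Ω, dff lam (Y ω) 0 = 1 := fun ω => by simp [dff]
  simp only [h]
  simp

open PowerSeries in
lemma psPow_eq_pscomp_Bser {Ω : Type*} [MeasurableSpace Ω] (μ : Measure Ω)
    [IsProbabilityMeasure μ] (Y : Ω → ℝ) (lam : ℝ) (x : ℝ) :
    psPow (momSeries lam μ Y) x = pscomp (Bser x) (momSeries lam μ Y - 1) := by
  have hg := constantCoeff_momSeries_sub_one μ Y lam
  rw [psPow, pscomp_exp_C_mul, pscomp_assoc hg constantCoeff_logSeries, starA]

end PSAux


theorem coeff_psPow_eq_sum_braceY_eq_sum_S1Y {Ω : Type*} [MeasurableSpace Ω] (μ : MeasureTheory.Measure Ω)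
    [MeasureTheory.IsProbabilityMeasure μ] (Y : Ω → ℝ) (hY : Measurable Y)
    (hmom : ∀ n : ℕ, MeasureTheory.Integrable (fun ω => |Y ω| ^ n) μ)
    (lam : ℝ) (hlam : lam ≠ 0) :
    ∀ (x : ℝ) (n : ℕ),
      (n.factorial : ℝ) * PowerSeries.coeff (R := ℝ) n (psPow (momSeries lam μ Y) x) =
          ∑ k ∈ Finset.range (n + 1), braceY lam μ Y n k * ffall x k ∧
        (n.factorial : ℝ) * PowerSeries.coeff (R := ℝ) n (psPow (momSeries lam μ Y) x) =
          ∑ k ∈ Finset.range (n + 1), (-1 : ℝ) ^ (n - k) * drf lam x k * S1Y lam μ Y n k := by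
  intro x n
  have hg := PSAux.constantCoeff_momSeries_sub_one μ Y lam
  have hmain := PSAux.psPow_eq_pscomp_Bser μ Y lam x
  constructor
  · rw [hmain, PSAux.coeff_pscomp, Finset.mul_sum]
    refine Finset.sum_congr rfl fun k _ => ?_
    simp only [PSAux.Bser, PowerSeries.coeff_mk, braceY]
    ring
  · have hmain2 : psPow (momSeries lam μ Y) x =
        pscomp (PSAux.Eser lam x) (cumSeries lam μ Y) := by
      rw [hmain, ← PSAux.starB hlam x,
        ← PSAux.pscomp_assoc hg (PSAux.constantCoeff_degLog (-lam)), cumSeries]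
    rw [hmain2, PSAux.coeff_pscomp, Finset.mul_sum]
    refine Finset.sum_congr rfl fun k _ => ?_
    simp only [PSAux.Eser, PowerSeries.coeff_mk, S1Y]
    have h1 : ((-1:ℝ))^(n-k) * ((-1:ℝ))^(n-k) = 1 := by
      rw [← pow_add]
      exact Even.neg_one_pow ⟨n-k, rfl⟩
    calc (n.factorial : ℝ) * (drf lam x k / k.factorial * PowerSeries.coeff (R := ℝ) n ((cumSeries lam μ Y)^k))
        = (((-1:ℝ))^(n-k) * ((-1:ℝ))^(n-k)) * (drf lam x k *
            ((n.factorial : ℝ) * PowerSeries.coeff (R := ℝ) n ((cumSeries lam μ Y)^k) / k.factorial)) := by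
          rw [h1]; ring
      _ = (-1 : ℝ) ^ (n - k) * drf lam x k * ((-1 : ℝ) ^ (n - k) *
            ((n.factorial : ℝ) * PowerSeries.coeff (R := ℝ) n ((cumSeries lam μ Y)^k) / k.factorial)) := by
          ring

end
end

section
/- Let Y be a real-valued random variable with all absolute moments finite and fix a nonzero real λ. Then for all integers n≥l≥0, {n brace l}_{Y,λ} = Σ_{k=l}^{n} (−1)^{n−k} S_{1,λ}^Y(n,k) {k brace l}_{−λ}. -/
/-!
With `W = F_Y - 1` and `L = log_{-λ}(1+u)`, the series `G_Y^k/k! = (L^k/k!) ∘ W` expands as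
`Σₘ S_{1,-λ}(m,k) W^m/m!`, where `S_{1,-λ}(m,k) = m!·[u^m] L^k/k!` are the degenerate Stirling
numbers of the first kind. The differential equation `(1+u)L' = 1 - λL` gives their recurrence and
hence `(x)ₘ = Σₖ S_{1,-λ}(m,k) (x)_{k,-λ}`; substituting `(x)_{k,-λ} = Σₗ {k brace l}_{-λ} (x)ₗ`
and comparing coefficients of the independent `(x)ₗ` shows that the two arrays are inverse.
Summing `(-1)^{n-k} S_{1,λ}^Y(n,k) {k brace l}_{-λ}` over `k` therefore leaves `n!·[X^n] W^l/l!`.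
-/

open MeasureTheory Finset

noncomputable section

open PowerSeries

lemma dff_succ (lam x : ℝ) (n : ℕ) : dff lam x (n + 1) = dff lam x n * (x - n * lam) :=
  prod_range_succ _ _

lemma ffall_succ (x : ℝ) (n : ℕ) : ffall x (n + 1) = ffall x n * (x - n) :=
  prod_range_succ _ _

lemma ffall_natCast (j i : ℕ) : ffall (j : ℝ) i = j.descFactorial i := by
  rw [ffall, ← descPochhammer_eval_eq_prod_range, descPochhammer_eval_eq_descFactorial]

/-- Evaluate at `x = j` by strong induction on `j`: `(j)ᵢ = 0` for `i > j` and `(j)ⱼ = j!`. -/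
lemma eq_zero_of_sum_mul_ffall_eq_zero {b : ℕ → ℝ} {M : ℕ}
    (h : ∀ x : ℝ, ∑ i ∈ range M, b i * ffall x i = 0) {j : ℕ} (hj : j < M) : b j = 0 := by
  induction j using Nat.strong_induction_on with
  | _ j ih =>
    have hsum := h j
    rw [sum_eq_single j ?_ (by simp [hj]), ffall_natCast, Nat.descFactorial_self] at hsum
    · simpa [Nat.factorial_ne_zero] using hsum
    intro i _ hij
    rcases lt_or_gt_of_ne hij with hlt | hgt
    · rw [ih i hlt (hlt.trans hj), zero_mul]
    · rw [ffall_natCast, Nat.descFactorial_eq_zero_iff_lt.mpr hgt, Nat.cast_zero, mul_zero]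

lemma coeff_pow_eq_zero_of_lt {R : Type*} [CommSemiring R] {g : R⟦X⟧} (hg : constantCoeff g = 0)
    {n k : ℕ} (h : n < k) : coeff n (g ^ k) = 0 :=
  coeff_of_lt_order _ ((Nat.cast_lt.mpr h).trans_le (le_order_pow_of_constantCoeff_eq_zero k hg))

lemma pscomp_eq_subst (f : ℝ⟦X⟧) {g : ℝ⟦X⟧} (hg : constantCoeff g = 0) :
    pscomp f g = f.subst g := by
  ext n
  rw [pscomp, coeff_mk, coeff_subst' (HasSubst.of_constantCoeff_zero' hg),
    finsum_eq_sum_of_support_subset _ (s := range (n + 1)) ?_]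
  · rfl
  intro d hd
  by_contra hdn
  simp only [coe_range, Set.mem_Iio, not_lt] at hdn
  simp [coeff_pow_eq_zero_of_lt hg (Nat.lt_of_succ_le hdn)] at hd

lemma coeff_pscomp_pow (f : ℝ⟦X⟧) {g : ℝ⟦X⟧} (hg : constantCoeff g = 0) (n k : ℕ) :
    coeff n (pscomp f g ^ k) = ∑ m ∈ range (n + 1), coeff m (f ^ k) * coeff n (g ^ m) := by
  rw [pscomp_eq_subst f hg, ← subst_pow (HasSubst.of_constantCoeff_zero' hg),
    ← pscomp_eq_subst _ hg, pscomp, coeff_mk]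

lemma coeff_one_add_X_mul_derivative {R : Type*} [CommSemiring R] (f : R⟦X⟧) (n : ℕ) :
    coeff n ((1 + X) * d⁄dX R f) = (n + 1) * coeff (n + 1) f + n * coeff n f := by
  cases n <;>
    simp [add_mul, coeff_derivative, mul_comm, coeff_zero_X_mul, -coeff_zero_eq_constantCoeff]

lemma constantCoeff_degLogSeries (a : ℝ) : constantCoeff (degLogSeries a) = 0 := by
  simp [← coeff_zero_eq_constantCoeff_apply, degLogSeries]

lemma coeff_succ_degLogSeries {a : ℝ} (ha : a ≠ 0) (n : ℕ) :
    coeff (n + 1) (degLogSeries a) = ffall (a - 1) n / (n + 1).factorial := by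
  suffices a ^ n * dff (1 / a) 1 (n + 1) = ffall (a - 1) n by
    simp [degLogSeries, ← this]
  induction n with
  | zero => simp [dff, ffall]
  | succ n ih =>
    rw [dff_succ, ffall_succ, ← ih]
    field_simp
    push_cast
    ring

/-- As `L = ((1+u)^a - 1)/a`, both sides equal `(1+u)^a`. -/
lemma one_add_X_mul_derivative_degLogSeries {a : ℝ} (ha : a ≠ 0) :
    (1 + X) * d⁄dX ℝ (degLogSeries a) = 1 + C a * degLogSeries a := by
  ext n
  rw [coeff_one_add_X_mul_derivative]
  cases n with
  | zero => simp [degLogSeries, dff]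
  | succ n =>
    simp only [coeff_succ_degLogSeries ha, map_add, coeff_one, coeff_C_mul, ffall_succ,
      Nat.factorial_succ (n + 1)]
    field_simp
    push_cast
    ring

/-- The degenerate Stirling numbers of the first kind `S_{1,a}(n,k)`, with exponential generating
function `(log_a (1+u))^k / k!`. -/
def degStirling1 (a : ℝ) (n k : ℕ) : ℝ :=
  n.factorial * coeff n (degLogSeries a ^ k) / k.factorial

lemma degStirling1_eq_zero_of_lt (a : ℝ) {n k : ℕ} (h : n < k) : degStirling1 a n k = 0 := by
  simp [degStirling1, coeff_pow_eq_zero_of_lt (constantCoeff_degLogSeries a) h]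

lemma degStirling1_zero_right (a : ℝ) (n : ℕ) :
    degStirling1 a n 0 = if n = 0 then 1 else 0 := by
  cases n <;> simp [degStirling1, coeff_one]

lemma degStirling1_succ_succ {a : ℝ} (ha : a ≠ 0) (n k : ℕ) :
    degStirling1 a (n + 1) (k + 1) + n * degStirling1 a n (k + 1) =
      degStirling1 a n k + a * (k + 1) * degStirling1 a n (k + 1) := by
  have hODE : (1 + X) * d⁄dX ℝ (degLogSeries a ^ (k + 1)) =
      C ((k : ℝ) + 1) * (degLogSeries a ^ k + C a * degLogSeries a ^ (k + 1)) := by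
    rw [Derivation.leibniz_pow, smul_eq_mul, Nat.add_sub_cancel, map_add, map_natCast, map_one]
    linear_combination ((k + 1) * degLogSeries a ^ k) * one_add_X_mul_derivative_degLogSeries ha
  have hcoeff := congrArg (coeff n) hODE
  rw [coeff_one_add_X_mul_derivative, coeff_C_mul, map_add, coeff_C_mul] at hcoeff
  simp only [degStirling1, Nat.factorial_succ]
  push_cast
  field_simp
  linear_combination hcoeff

lemma ffall_eq_sum_degStirling1_mul_dff {a : ℝ} (ha : a ≠ 0) (x : ℝ) (m : ℕ) :
    ffall x m = ∑ k ∈ range (m + 1), degStirling1 a m k * dff a x k := by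
  induction m with
  | zero => simp [ffall, dff, degStirling1_zero_right]
  | succ m ih =>
    set g : ℕ → ℝ := fun k => (a * k - m) * degStirling1 a m k * dff a x k
    have hshift : ∑ k ∈ range (m + 1), g (k + 1) = ∑ k ∈ range (m + 1), g k := by
      have hfirst : g 0 = 0 := by
        rcases m with _ | m <;> simp [g, degStirling1_zero_right]
      have hlast : g (m + 1) = 0 := by simp [g, degStirling1_eq_zero_of_lt a (Nat.lt_succ_self m)]
      have := sum_range_succ' g (m + 1)
      rwa [sum_range_succ, hfirst, hlast, add_zero, add_zero, eq_comm] at this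
    have hrec : ∀ k, degStirling1 a (m + 1) (k + 1) * dff a x (k + 1) =
        degStirling1 a m k * dff a x (k + 1) + g (k + 1) := by
      intro k
      simp only [g]
      push_cast
      linear_combination dff a x (k + 1) * degStirling1_succ_succ ha m k
    rw [sum_range_succ', degStirling1_zero_right, if_neg m.succ_ne_zero, zero_mul, add_zero]
    simp_rw [hrec, sum_add_distrib, hshift, ← sum_add_distrib, ffall_succ, ih, sum_mul]
    refine sum_congr rfl fun k _ => ?_
    simp only [g, dff_succ]
    ring

/-- Substitute the expansion of each `(x)ₖ,ₐ` into that of `(x)ₘ` and compare coefficients. -/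
lemma sum_degStirling1_mul_eq_ite {a : ℝ} (ha : a ≠ 0) {S : ℕ → ℕ → ℝ}
    (hS : ∀ x n, dff a x n = ∑ k ∈ range (n + 1), S n k * ffall x k) (m l : ℕ) :
    ∑ k ∈ Icc l m, degStirling1 a m k * S k l = if m = l then 1 else 0 := by
  rcases lt_or_ge m l with hml | hlm
  · simp [Icc_eq_empty_of_lt hml, hml.ne]
  set c : ℕ → ℝ := fun j => ∑ k ∈ Icc j m, degStirling1 a m k * S k j with hc
  have hexp : ∀ x, ffall x m = ∑ j ∈ range (m + 1), c j * ffall x j := by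
    intro x
    simp_rw [ffall_eq_sum_degStirling1_mul_dff ha x m, hS, mul_sum, hc, sum_mul, mul_assoc]
    exact sum_comm' fun k j => by simp only [mem_range, mem_Icc]; omega
  have hc_sub := eq_zero_of_sum_mul_ffall_eq_zero (b := fun j => c j - if j = m then 1 else 0)
    (M := m + 1) (fun x => by simp [sub_mul, sum_sub_distrib, ← hexp]) (Nat.lt_succ_of_le hlm)
  rw [sub_eq_zero] at hc_sub
  simpa [eq_comm] using hc_sub

lemma constantCoeff_momSeries_sub_one (lam : ℝ) {Ω : Type*} [MeasurableSpace Ω]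
    (μ : Measure Ω) [IsProbabilityMeasure μ] (Y : Ω → ℝ) : constantCoeff (momSeries lam μ Y - 1) = 0 := by
  rw [← coeff_zero_eq_constantCoeff_apply]
  simp [momSeries, dff]

lemma neg_one_pow_mul_S1Y_eq_sum (lam : ℝ) {Ω : Type*} [MeasurableSpace Ω] (μ : Measure Ω)
    [IsProbabilityMeasure μ] (Y : Ω → ℝ) (n k : ℕ) :
    (-1 : ℝ) ^ (n - k) * S1Y lam μ Y n k =
      ∑ m ∈ range (n + 1), degStirling1 (-lam) m k * braceY lam μ Y n m := by
  rw [S1Y, ← mul_assoc, ← mul_pow, neg_one_mul, neg_neg, one_pow, one_mul, cumSeries,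
    coeff_pscomp_pow _ (constantCoeff_momSeries_sub_one lam μ Y), mul_sum, sum_div]
  refine sum_congr rfl fun m _ => ?_
  simp only [degStirling1, braceY]
  field_simp

theorem braceY_eq_sum_S1Y_mul_degStirling2_general {Ω : Type*} [MeasurableSpace Ω] (μ : MeasureTheory.Measure Ω)
    [MeasureTheory.IsProbabilityMeasure μ] (Y : Ω → ℝ)
    (lam : ℝ) (hlam : lam ≠ 0)
    (St2neg : ℕ → ℕ → ℝ)
    (hSt2neg : ∀ (x : ℝ) (n : ℕ),
      dff (-lam) x n = ∑ k ∈ Finset.range (n + 1), St2neg n k * ffall x k)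
    (n l : ℕ) (hln : l ≤ n) :
    braceY lam μ Y n l =
      ∑ k ∈ Finset.Icc l n, (-1 : ℝ) ^ (n - k) * S1Y lam μ Y n k * St2neg k l := by
  have horth : ∀ m ∈ range (n + 1),
      ∑ k ∈ Icc l n, degStirling1 (-lam) m k * St2neg k l = if m = l then 1 else 0 := by
    intro m hm
    rw [← sum_degStirling1_mul_eq_ite (neg_ne_zero.mpr hlam) hSt2neg m l]
    refine (sum_subset (Icc_subset_Icc_right (by simpa [Nat.lt_succ_iff] using hm)) ?_).symm
    intro k hk hkm
    simp only [mem_Icc, not_and, not_le] at hk hkm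
    rw [degStirling1_eq_zero_of_lt _ (hkm hk.1), zero_mul]
  calc braceY lam μ Y n l
      = ∑ m ∈ range (n + 1), braceY lam μ Y n m * if m = l then 1 else 0 := by
        simp [Nat.lt_succ_of_le hln]
    _ = ∑ m ∈ range (n + 1), ∑ k ∈ Icc l n,
          degStirling1 (-lam) m k * braceY lam μ Y n m * St2neg k l := by
        refine sum_congr rfl fun m hm => ?_
        rw [← horth m hm, mul_sum]
        exact sum_congr rfl fun k _ => by ring
    _ = ∑ k ∈ Icc l n, (-1 : ℝ) ^ (n - k) * S1Y lam μ Y n k * St2neg k l := by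
        rw [sum_comm]
        simp_rw [neg_one_pow_mul_S1Y_eq_sum, sum_mul]

theorem braceY_eq_sum_S1Y_mul_degStirling2 {Ω : Type*} [MeasurableSpace Ω] (μ : MeasureTheory.Measure Ω)
    [MeasureTheory.IsProbabilityMeasure μ] (Y : Ω → ℝ) (hY : Measurable Y)
    (hmom : ∀ n : ℕ, MeasureTheory.Integrable (fun ω => |Y ω| ^ n) μ)
    (lam : ℝ) (hlam : lam ≠ 0)
    (St2neg : ℕ → ℕ → ℝ)
    (hSt2neg : ∀ (x : ℝ) (n : ℕ),
      dff (-lam) x n = ∑ k ∈ Finset.range (n + 1), St2neg n k * ffall x k)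
    (n l : ℕ) (hln : l ≤ n) :
    braceY lam μ Y n l =
      ∑ k ∈ Finset.Icc l n, (-1 : ℝ) ^ (n - k) * S1Y lam μ Y n k * St2neg k l :=
  braceY_eq_sum_S1Y_mul_degStirling2_general μ Y lam hlam St2neg hSt2neg n l hln

end
end
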